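/- arXiv:2504.00209 — 6 statements merged into one kernel-verified Lean document; each statement's English description precedes it below -/
import Mathlib

section
/- Fix μ₁ > 0 and l ∈ ℕ. There exists a constant c > 0 (depending only on l and μ₁) such that for all α with 0 < α ≤ μ₁² and all μ with 0 < μ ≤ μ₁, q_l(α,μ)/μ ≤ c·α^{−1/2}. -/
/-!
Write `q = q_l(α, μ)` and `w = 1 - (μ/μ₁)²`, so that `q/μ = μ / (μ² + α wˡ)`.
If `2μ² ≤ μ₁²` then `w ≥ 1/2`, and the AM-GM bound `μ² + t α ≥ 2 t μ √α` (for `0 < t ≤ 1`,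
here `t = 2⁻ˡ`) gives `q/μ ≤ 2ˡ / (2√α)`. Otherwise `μ` is comparable to `μ₁ ≥ √α`, and the
trivial bound `q ≤ 1` gives `q/μ ≤ 1/μ ≤ 2/μ₁ ≤ 2/√α`.
-/

open Real

/-- The weighted-II Tikhonov filter function `q_l(α, μ)`. -/
noncomputable def weightedTikhonov (μ₁ : ℝ) (l : ℕ) (α μ : ℝ) : ℝ :=
  μ ^ 2 / (μ ^ 2 + α * (1 - (μ / μ₁) ^ 2) ^ l)

lemma two_mul_mul_mul_le_sq_add_mul_sq {t : ℝ} (ht₀ : 0 ≤ t) (ht₁ : t ≤ 1) (x y : ℝ) :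
    2 * t * (x * y) ≤ x ^ 2 + t * y ^ 2 := by
  nlinarith [sq_nonneg (x - t * y), mul_nonneg (mul_nonneg ht₀ (sub_nonneg.2 ht₁)) (sq_nonneg y)]

lemma div_sq_add_mul_le {t x α : ℝ} (ht₀ : 0 < t) (ht₁ : t ≤ 1) (hx : 0 < x) (hα : 0 < α) :
    x / (x ^ 2 + t * α) ≤ 1 / (2 * t * √α) := by
  have hs : 0 < √α := sqrt_pos.2 hα
  rw [div_le_div_iff₀ (by positivity) (by positivity), one_mul]
  have := two_mul_mul_mul_le_sq_add_mul_sq ht₀.le ht₁ x √α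
  rw [sq_sqrt hα.le] at this
  linarith

namespace weightedTikhonov

variable {μ₁ α μ : ℝ} {l : ℕ}

lemma weight_nonneg (hμ₁ : 0 < μ₁) (hμ : 0 ≤ μ) (hμμ₁ : μ ≤ μ₁) : 0 ≤ 1 - (μ / μ₁) ^ 2 :=
  sub_nonneg.2 <| pow_le_one₀ (div_nonneg hμ hμ₁.le) (div_le_one_of_le₀ hμμ₁ hμ₁.le)

lemma half_le_weight (hμ₁ : 0 < μ₁) (hμ : 2 * μ ^ 2 ≤ μ₁ ^ 2) : 1 / 2 ≤ 1 - (μ / μ₁) ^ 2 := by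
  have : μ ^ 2 / μ₁ ^ 2 ≤ 1 / 2 := by
    rw [div_le_iff₀ (by positivity)]
    linarith
  rw [div_pow]
  linarith

lemma div_eq (hμ : 0 < μ) (hα : 0 ≤ α) (hw : 0 ≤ 1 - (μ / μ₁) ^ 2) :
    weightedTikhonov μ₁ l α μ / μ = μ / (μ ^ 2 + α * (1 - (μ / μ₁) ^ 2) ^ l) := by
  have : 0 < μ ^ 2 + α * (1 - (μ / μ₁) ^ 2) ^ l := by positivity
  unfold weightedTikhonov
  field_simp

lemma div_le_inv (hμ₁ : 0 < μ₁) (hα : 0 ≤ α) (hμ : 0 < μ) (hμμ₁ : μ ≤ μ₁) :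
    weightedTikhonov μ₁ l α μ / μ ≤ 1 / μ := by
  have hw := weight_nonneg hμ₁ hμ.le hμμ₁
  have hq : weightedTikhonov μ₁ l α μ ≤ 1 :=
    div_le_one_of_le₀ (le_add_of_nonneg_right (by positivity)) (by positivity)
  exact div_le_div_of_nonneg_right hq hμ.le

lemma div_le_of_two_mul_sq_le (hμ₁ : 0 < μ₁) (hα : 0 < α) (hμ : 0 < μ)
    (hμμ₁ : 2 * μ ^ 2 ≤ μ₁ ^ 2) :
    weightedTikhonov μ₁ l α μ / μ ≤ 2 ^ l / (2 * √α) := by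
  have hw := half_le_weight hμ₁ hμμ₁
  have ht : (0 : ℝ) < (2 ^ l)⁻¹ := by positivity
  have hweight : (2 ^ l)⁻¹ * α ≤ α * (1 - (μ / μ₁) ^ 2) ^ l := by
    rw [mul_comm, ← one_div, ← one_div_pow]
    gcongr
  calc weightedTikhonov μ₁ l α μ / μ
      = μ / (μ ^ 2 + α * (1 - (μ / μ₁) ^ 2) ^ l) := div_eq hμ hα.le (by linarith)
    _ ≤ μ / (μ ^ 2 + (2 ^ l)⁻¹ * α) := by gcongr
    _ ≤ 1 / (2 * (2 ^ l)⁻¹ * √α) :=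
        div_sq_add_mul_le ht (inv_le_one_of_one_le₀ (one_le_pow₀ one_le_two)) hμ hα
    _ = 2 ^ l / (2 * √α) := by field_simp

lemma div_le_of_lt_two_mul_sq (hμ₁ : 0 < μ₁) (hα : 0 < α) (hαμ₁ : α ≤ μ₁ ^ 2)
    (hμ : 0 < μ) (hμμ₁ : μ ≤ μ₁) (hμ₁μ : μ₁ ^ 2 < 2 * μ ^ 2) :
    weightedTikhonov μ₁ l α μ / μ ≤ 2 / √α := by
  have hs : √α ≤ μ₁ := (sqrt_le_sqrt hαμ₁).trans_eq (sqrt_sq hμ₁.le)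
  calc weightedTikhonov μ₁ l α μ / μ ≤ 1 / μ := div_le_inv hμ₁ hα.le hμ hμμ₁
    _ ≤ 2 / μ₁ := by
        rw [div_le_div_iff₀ hμ hμ₁]
        nlinarith
    _ ≤ 2 / √α := by gcongr

end weightedTikhonov

/-- For μ₁ > 0 and l ∈ ℕ there is a constant c > 0 such that for all
0 < α ≤ μ₁² and 0 < μ ≤ μ₁, `q_l(α,μ)/μ ≤ c α^{-1/2}`. -/
theorem stmt_1 (μ₁ : ℝ) (hμ₁ : 0 < μ₁) (l : ℕ) :
    ∃ c : ℝ, 0 < c ∧ ∀ α : ℝ, 0 < α → α ≤ μ₁ ^ 2 → ∀ μ : ℝ, 0 < μ → μ ≤ μ₁ →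
      (μ ^ 2 / (μ ^ 2 + α * (1 - (μ / μ₁) ^ 2) ^ l)) / μ ≤ c * α ^ (-(1 / 2 : ℝ)) := by
  refine ⟨2 ^ l + 2, by positivity, fun α hα hαμ₁ μ hμ hμμ₁ => ?_⟩
  rw [rpow_neg hα.le, ← sqrt_eq_rpow, ← div_eq_mul_inv]
  change weightedTikhonov μ₁ l α μ / μ ≤ _
  have hs : 0 < √α := sqrt_pos.2 hα
  rcases le_or_gt (2 * μ ^ 2) (μ₁ ^ 2) with hsmall | hlarge
  · calc weightedTikhonov μ₁ l α μ / μ ≤ 2 ^ l / (2 * √α) :=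
          weightedTikhonov.div_le_of_two_mul_sq_le hμ₁ hα hμ hsmall
      _ ≤ 2 ^ l / √α := by gcongr; linarith
      _ ≤ (2 ^ l + 2) / √α := by gcongr; linarith
  · calc weightedTikhonov μ₁ l α μ / μ ≤ 2 / √α :=
          weightedTikhonov.div_le_of_lt_two_mul_sq hμ₁ hα hαμ₁ hμ hμμ₁ hlarge
      _ ≤ (2 ^ l + 2) / √α := by gcongr; linarith [pow_pos two_pos (M₀ := ℝ) l]
end

section
/- Fix μ₁ > 0, l ∈ ℕ, and r ≥ 1/2. There exists a constant c > 0 (depending only on l and μ₁) such that for all α with 0 < α ≤ μ₁² and all μ with 0 < μ ≤ μ₁, q_l^r(α,μ)/μ ≤ c·α^{−1/2}. (This is condition (B1) with γ = 1/2 for the fractional weighted Tikhonov filter.) -/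
open Real

/-! With `D = μ² + α (1 - (μ/μ₁)²)^l` the quantity is `(μ²/D)^r / μ`. Since `μ²/D ≤ 1` and
`r ≥ 1/2`, it is at most `(μ²/D)^(1/2) / μ = D^(-1/2)`. Writing `t = (μ/μ₁)² ∈ [0, 1]` and using
`α ≤ μ₁²`, we get `D ≥ α (t + (1 - t)^l) ≥ 2^(-l) α`, hence the bound with `c = √(2^l)`. -/

/-- Either `t ≥ 1/2` or `(1 - t)^l ≥ 2^(-l)`. -/
lemma one_le_two_pow_mul_add_one_sub_pow {t : ℝ} (ht₀ : 0 ≤ t) (ht₁ : t ≤ 1) (l : ℕ) :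
    1 ≤ 2 ^ l * (t + (1 - t) ^ l) := by
  rcases l.eq_zero_or_pos with rfl | hl
  · simpa using ht₀
  have hpow : (0 : ℝ) ≤ (1 - t) ^ l := pow_nonneg (by linarith) l
  rcases le_or_gt (1 / 2) t with ht | ht
  · have h2 : (2 : ℝ) ≤ 2 ^ l := le_self_pow₀ (by norm_num) hl.ne'
    nlinarith
  · have hhalf : (1 / 2 : ℝ) ^ l ≤ (1 - t) ^ l := pow_le_pow_left₀ (by norm_num) (by linarith) l
    have h2 : (2 : ℝ) ^ l * (1 / 2) ^ l = 1 := by rw [← mul_pow]; norm_num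
    nlinarith [pow_pos (two_pos : (0 : ℝ) < 2) l]

lemma le_two_pow_mul_add_mul_one_sub_div_sq_pow {μ₁ α μ : ℝ} (hμ₁ : 0 < μ₁) (hα : 0 ≤ α)
    (hαμ₁ : α ≤ μ₁ ^ 2) (hμ : 0 ≤ μ) (hμμ₁ : μ ≤ μ₁) (l : ℕ) :
    α ≤ 2 ^ l * (μ ^ 2 + α * (1 - (μ / μ₁) ^ 2) ^ l) := by
  set t := (μ / μ₁) ^ 2
  have ht₀ : 0 ≤ t := by positivity
  have ht₁ : t ≤ 1 := pow_le_one₀ (by positivity) ((div_le_one hμ₁).mpr hμμ₁)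
  have hμt : α * t ≤ μ ^ 2 := by
    calc α * t ≤ μ₁ ^ 2 * t := mul_le_mul_of_nonneg_right hαμ₁ ht₀
      _ = μ ^ 2 := by simp only [t]; field_simp
  calc α ≤ α * (2 ^ l * (t + (1 - t) ^ l)) :=
        le_mul_of_one_le_right hα (one_le_two_pow_mul_add_one_sub_pow ht₀ ht₁ l)
    _ ≤ 2 ^ l * (μ ^ 2 + α * (1 - t) ^ l) := by
        have : (0 : ℝ) ≤ 2 ^ l := by positivity
        nlinarith

lemma rpow_two_mul_div_rpow_div_le_inv_sqrt {μ D r : ℝ} (hμ : 0 < μ) (hμD : μ ^ 2 ≤ D)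
    (hr : 1 / 2 ≤ r) : μ ^ (2 * r) / D ^ r / μ ≤ (√D)⁻¹ := by
  have hD : 0 < D := lt_of_lt_of_le (by positivity) hμD
  have hq : μ ^ 2 / D ≤ 1 := (div_le_one hD).mpr hμD
  calc μ ^ (2 * r) / D ^ r / μ = (μ ^ 2 / D) ^ r / μ := by
        rw [div_rpow (by positivity) hD.le, rpow_mul hμ.le]; norm_cast
    _ ≤ (μ ^ 2 / D) ^ (1 / 2 : ℝ) / μ := by
        gcongr ?_ / μ
        exact rpow_le_rpow_of_exponent_ge (by positivity) hq hr
    _ = (√D)⁻¹ := by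
        rw [← sqrt_eq_rpow, sqrt_div' _ hD.le, sqrt_sq hμ.le]
        field_simp

/-- For μ₁ > 0, l ∈ ℕ and r ≥ 1/2 there is a constant c > 0 such that for
all 0 < α ≤ μ₁² and 0 < μ ≤ μ₁, `q_l^r(α,μ)/μ ≤ c α^{-1/2}` (condition (B1), γ = 1/2). -/
theorem stmt_2 (μ₁ : ℝ) (hμ₁ : 0 < μ₁) (l : ℕ) (r : ℝ) (hr : 1 / 2 ≤ r) :
    ∃ c : ℝ, 0 < c ∧ ∀ α : ℝ, 0 < α → α ≤ μ₁ ^ 2 → ∀ μ : ℝ, 0 < μ → μ ≤ μ₁ →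
      (μ ^ (2 * r) / (μ ^ 2 + α * (1 - (μ / μ₁) ^ 2) ^ l) ^ r) / μ
        ≤ c * α ^ (-(1 / 2 : ℝ)) := by
  refine ⟨√(2 ^ l), by positivity, fun α hα hαμ₁ μ hμ hμμ₁ => ?_⟩
  set D := μ ^ 2 + α * (1 - (μ / μ₁) ^ 2) ^ l
  have hw : 0 ≤ 1 - (μ / μ₁) ^ 2 := by
    have : (μ / μ₁) ^ 2 ≤ 1 := pow_le_one₀ (by positivity) ((div_le_one hμ₁).mpr hμμ₁)
    linarith
  have hμD : μ ^ 2 ≤ D := le_add_of_nonneg_right (by positivity)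
  have hD : 0 < D := by positivity
  have hαD : √α ≤ √(2 ^ l) * √D := by
    rw [← sqrt_mul (by positivity)]
    exact sqrt_le_sqrt (le_two_pow_mul_add_mul_one_sub_div_sq_pow hμ₁ hα.le hαμ₁ hμ.le hμμ₁ l)
  calc _ ≤ (√D)⁻¹ := rpow_two_mul_div_rpow_div_le_inv_sqrt hμ hμD hr
    _ ≤ √(2 ^ l) * (√α)⁻¹ := by
        rw [← div_eq_mul_inv, le_div_iff₀ (sqrt_pos.mpr hα), inv_mul_eq_div,
          div_le_iff₀ (sqrt_pos.mpr hD)]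
        linarith
    _ = √(2 ^ l) * α ^ (-(1 / 2 : ℝ)) := by rw [rpow_neg hα.le, ← sqrt_eq_rpow]
end

section
/- Fix μ₁ > 0, l ∈ ℕ, and r ≥ 1/2. For every α > 0 and every μ with 0 < μ ≤ μ₁, q_l^r(α,μ)/μ ≤ 1/√(μ² + α·(1 − (μ/μ₁)²)^l); in particular, for each fixed α > 0 the function μ ↦ q_l^r(α,μ)/μ is bounded on (0, μ₁] (condition (A1)). -/
open Real Set

/-!
Writing `D = μ² + α (1 - (μ/μ₁)²)^l ≥ μ²`, the quotient is `(μ²/D)^r / μ`, and since `μ²/D ≤ 1` and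
`r ≥ 1/2` this is at most `(μ²/D)^(1/2) / μ = 1/√D`. The denominator `D` is continuous and positive
on the compact interval `[0, μ₁]` (at `μ = 0` it equals `α`), so it is bounded below there by some
`m > 0`, which bounds the quotient by `1/√m`.
-/

lemma rpow_two_mul_div_rpow_div_le_one_div_sqrt {μ D r : ℝ} (hμ : 0 < μ) (hD : μ ^ 2 ≤ D)
    (hr : 1 / 2 ≤ r) : μ ^ (2 * r) / D ^ r / μ ≤ 1 / √D := by
  have hD0 : 0 < D := (by positivity : 0 < μ ^ 2).trans_le hD
  have hq0 : 0 < μ ^ 2 / D := by positivity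
  have hq1 : μ ^ 2 / D ≤ 1 := (div_le_one hD0).2 hD
  have hquot : μ ^ (2 * r) / D ^ r = (μ ^ 2 / D) ^ r := by
    rw [div_rpow (by positivity) hD0.le, rpow_mul hμ.le, rpow_two]
  have hhalf : (μ ^ 2 / D) ^ (1 / 2 : ℝ) = μ / √D := by
    rw [← sqrt_eq_rpow, sqrt_div' _ hD0.le, sqrt_sq hμ.le]
  calc μ ^ (2 * r) / D ^ r / μ = (μ ^ 2 / D) ^ r / μ := by rw [hquot]
    _ ≤ (μ ^ 2 / D) ^ (1 / 2 : ℝ) / μ :=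
      div_le_div_of_nonneg_right (rpow_le_rpow_of_exponent_ge hq0 hq1 hr) hμ.le
    _ = 1 / √D := by rw [hhalf]; field_simp

section WeightedTikhonov

variable {μ₁ α μ : ℝ} {l : ℕ}

/-- The denominator of the weighted-II Tikhonov filter `q_l(α, μ) = μ² / (μ² + α (1 - (μ/μ₁)²)^l)`. -/
noncomputable def weightedTikhonovDenom (μ₁ : ℝ) (l : ℕ) (α μ : ℝ) : ℝ :=
  μ ^ 2 + α * (1 - (μ / μ₁) ^ 2) ^ l

lemma one_sub_div_sq_nonneg (hμ₁ : 0 < μ₁) (hμ : 0 ≤ μ) (hle : μ ≤ μ₁) :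
    0 ≤ 1 - (μ / μ₁) ^ 2 :=
  sub_nonneg.2 (pow_le_one₀ (div_nonneg hμ hμ₁.le) (div_le_one_of_le₀ hle hμ₁.le))

lemma sq_le_weightedTikhonovDenom (hμ₁ : 0 < μ₁) (hα : 0 < α) (hμ : 0 ≤ μ) (hle : μ ≤ μ₁) :
    μ ^ 2 ≤ weightedTikhonovDenom μ₁ l α μ :=
  le_add_of_nonneg_right (mul_nonneg hα.le (pow_nonneg (one_sub_div_sq_nonneg hμ₁ hμ hle) l))

lemma weightedTikhonovDenom_pos (hμ₁ : 0 < μ₁) (hα : 0 < α) (hμ : 0 ≤ μ) (hle : μ ≤ μ₁) :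
    0 < weightedTikhonovDenom μ₁ l α μ := by
  rcases hμ.eq_or_lt with rfl | hμ
  · simpa [weightedTikhonovDenom] using hα
  · exact (by positivity : 0 < μ ^ 2).trans_le (sq_le_weightedTikhonovDenom hμ₁ hα hμ.le hle)

lemma continuous_weightedTikhonovDenom : Continuous (weightedTikhonovDenom μ₁ l α) := by
  unfold weightedTikhonovDenom
  fun_prop

lemma exists_pos_le_weightedTikhonovDenom (hμ₁ : 0 < μ₁) (hα : 0 < α) :
    ∃ m > 0, ∀ μ ∈ Icc 0 μ₁, m ≤ weightedTikhonovDenom μ₁ l α μ := by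
  obtain ⟨μ₀, ⟨hμ₀, hμ₀le⟩, hmin⟩ := isCompact_Icc.exists_isMinOn (nonempty_Icc.2 hμ₁.le)
    continuous_weightedTikhonovDenom.continuousOn
  exact ⟨_, weightedTikhonovDenom_pos hμ₁ hα hμ₀ hμ₀le, hmin⟩

end WeightedTikhonov

/-- For μ₁ > 0, l ∈ ℕ, r ≥ 1/2, α > 0 and 0 < μ ≤ μ₁,
`q_l^r(α,μ)/μ ≤ 1/√(μ² + α (1-(μ/μ₁)²)^l)`; in particular for each fixed α > 0 the map
μ ↦ q_l^r(α,μ)/μ is bounded on (0, μ₁] (condition (A1)). -/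
theorem stmt_3 (μ₁ : ℝ) (hμ₁ : 0 < μ₁) (l : ℕ) (r : ℝ) (hr : 1 / 2 ≤ r)
    (α : ℝ) (hα : 0 < α) :
    (∀ μ : ℝ, 0 < μ → μ ≤ μ₁ →
      (μ ^ (2 * r) / (μ ^ 2 + α * (1 - (μ / μ₁) ^ 2) ^ l) ^ r) / μ
        ≤ 1 / Real.sqrt (μ ^ 2 + α * (1 - (μ / μ₁) ^ 2) ^ l)) ∧
    ∃ C : ℝ, ∀ μ : ℝ, 0 < μ → μ ≤ μ₁ →
      (μ ^ (2 * r) / (μ ^ 2 + α * (1 - (μ / μ₁) ^ 2) ^ l) ^ r) / μ ≤ C := by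
  have hbound : ∀ μ : ℝ, 0 < μ → μ ≤ μ₁ →
      μ ^ (2 * r) / weightedTikhonovDenom μ₁ l α μ ^ r / μ
        ≤ 1 / √(weightedTikhonovDenom μ₁ l α μ) := fun μ hμ hle =>
    rpow_two_mul_div_rpow_div_le_one_div_sqrt hμ (sq_le_weightedTikhonovDenom hμ₁ hα hμ.le hle) hr
  refine ⟨hbound, ?_⟩
  obtain ⟨m, hm, hmle⟩ := exists_pos_le_weightedTikhonovDenom (l := l) hμ₁ hα
  refine ⟨1 / √m, fun μ hμ hle => (hbound μ hμ hle).trans ?_⟩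
  gcongr
  exact hmle μ ⟨hμ.le, hle⟩
end

section
/- Fix μ₁ > 0 and l ∈ ℕ. For every σ with 0 < σ ≤ 2, every α > 0, and every μ with 0 < μ ≤ μ₁, one has (1 − q_l(α,μ))·μ^σ ≤ α^{σ/2}. (This is condition (B2) with γ = 1/2 and constant c_σ = 1 for the weighted-II Tikhonov filter.) -/
open Real

/-
With `m = μ²`, `t = σ/2` and `a = α (1 - (μ/μ₁)²)^l ∈ [0, α]`, the quantity to bound is
`x m^t` with `x = a/(m + a) ∈ [0, 1]`. Since `t ≤ 1`, `x ≤ x^t`, so `x m^t ≤ (x m)^t`, and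
`x m = a m/(m + a) ≤ a ≤ α`.
-/

lemma one_sub_div_sq_mem_Icc {μ μ₁ : ℝ} (hμ : 0 ≤ μ) (hμμ₁ : μ ≤ μ₁) :
    1 - (μ / μ₁) ^ 2 ∈ Set.Icc 0 1 := by
  have hr : 0 ≤ μ / μ₁ := div_nonneg hμ (hμ.trans hμμ₁)
  exact ⟨sub_nonneg.2 (pow_le_one₀ hr (div_le_one_of_le₀ hμμ₁ (hμ.trans hμμ₁))),
    sub_le_self _ (sq_nonneg _)⟩

lemma one_sub_div_add_mul_rpow_le {m a t : ℝ} (hm : 0 < m) (ha : 0 ≤ a) (ht0 : 0 ≤ t)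
    (ht1 : t ≤ 1) : (1 - m / (m + a)) * m ^ t ≤ a ^ t := by
  have hma : 0 < m + a := add_pos_of_pos_of_nonneg hm ha
  set x := a / (m + a) with hx
  have hsub : 1 - m / (m + a) = x := by
    rw [one_sub_div hma.ne', add_sub_cancel_left]
  have hx0 : 0 ≤ x := div_nonneg ha hma.le
  have hx1 : x ≤ 1 := div_le_one_of_le₀ (le_add_of_nonneg_left hm.le) hma.le
  have hxm : x * m ≤ a := by
    rw [hx, div_mul_eq_mul_div, mul_div_assoc]
    exact mul_le_of_le_one_right ha (div_le_one_of_le₀ (le_add_of_nonneg_right ha) hma.le)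
  calc (1 - m / (m + a)) * m ^ t = x * m ^ t := by rw [hsub]
    _ ≤ x ^ t * m ^ t :=
        mul_le_mul_of_nonneg_right (self_le_rpow_of_le_one hx0 hx1 ht1) (by positivity)
    _ = (x * m) ^ t := (mul_rpow hx0 hm.le).symm
    _ ≤ a ^ t := rpow_le_rpow (mul_nonneg hx0 hm.le) hxm ht0

theorem stmt_5_general (μ₁ : ℝ) (l : ℕ) (σ : ℝ) (hσ : 0 < σ) (hσ2 : σ ≤ 2)
    (α : ℝ) (hα : 0 < α) (μ : ℝ) (hμ : 0 < μ) (hμμ₁ : μ ≤ μ₁) :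
    (1 - μ ^ 2 / (μ ^ 2 + α * (1 - (μ / μ₁) ^ 2) ^ l)) * μ ^ σ ≤ α ^ (σ / 2) := by
  obtain ⟨hr0, hr1⟩ := one_sub_div_sq_mem_Icc hμ.le hμμ₁
  have hpow : μ ^ σ = (μ ^ 2) ^ (σ / 2) := by
    rw [← rpow_natCast_mul hμ.le]
    ring_nf
  rw [hpow]
  calc _ ≤ (α * (1 - (μ / μ₁) ^ 2) ^ l) ^ (σ / 2) :=
        one_sub_div_add_mul_rpow_le (by positivity) (by positivity) (by positivity) (by linarith)
    _ ≤ α ^ (σ / 2) :=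
        rpow_le_rpow (by positivity) (mul_le_of_le_one_right hα.le (pow_le_one₀ hr0 hr1))
          (by positivity)

/-- For μ₁ > 0, l ∈ ℕ, 0 < σ ≤ 2, α > 0 and 0 < μ ≤ μ₁,
`(1 - q_l(α,μ)) μ^σ ≤ α^{σ/2}` (condition (B2) with γ = 1/2 and c_σ = 1). -/
theorem stmt_5 (μ₁ : ℝ) (hμ₁ : 0 < μ₁) (l : ℕ) (σ : ℝ) (hσ : 0 < σ) (hσ2 : σ ≤ 2)
    (α : ℝ) (hα : 0 < α) (μ : ℝ) (hμ : 0 < μ) (hμμ₁ : μ ≤ μ₁) :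
    (1 - μ ^ 2 / (μ ^ 2 + α * (1 - (μ / μ₁) ^ 2) ^ l)) * μ ^ σ ≤ α ^ (σ / 2) :=
  stmt_5_general μ₁ l σ hσ hσ2 α hα μ hμ hμμ₁
end

section
/- Fix r ≥ 1/2 and let f(x) = ((x+1)^r − x^r)/(x+1)^{r−1} for x ≥ 0. Then f is monotone on [0,∞) (monotone nondecreasing if r ≥ 1 and monotone nonincreasing if 1/2 ≤ r ≤ 1), and consequently min{1, r} ≤ f(x) ≤ max{1, r} for all x ≥ 0. -/
/-!
With `t = x / (x + 1) ∈ [0, 1)`, which is increasing in `x`, one has `1 - t = 1 / (x + 1)` and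
`f x = (1 - t ^ r) / (1 - t)`: the slope of the secant of `t ↦ t ^ r` between `t` and `1`.
This slope is monotone in `t` because `t ↦ t ^ r` is convex for `r ≥ 1` and concave for
`0 ≤ r ≤ 1`. At `t = 0` it equals `1`, and it is bounded by the derivative `r` at `1` from the
appropriate side.
-/

open Real Set

lemma sub_rpow_div_rpow_eq_slope (r : ℝ) {x : ℝ} (hx : 0 ≤ x) :
    ((x + 1) ^ r - x ^ r) / (x + 1) ^ (r - 1) = slope (fun t : ℝ ↦ t ^ r) 1 (x / (x + 1)) := by
  have hx1 : 0 < x + 1 := by linarith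
  rw [slope_def_field, one_rpow, div_rpow hx hx1.le, rpow_sub_one hx1.ne']
  field_simp
  ring

lemma monotoneOn_slope_rpow_one {r : ℝ} (hr : 1 ≤ r) :
    MonotoneOn (slope (fun t : ℝ ↦ t ^ r) 1) (Ico 0 1) :=
  (convexOn_rpow hr).monotoneOn_slope_lt (x := 1) (by simp)

lemma antitoneOn_slope_rpow_one {r : ℝ} (hr₀ : 0 ≤ r) (hr₁ : r ≤ 1) :
    AntitoneOn (slope (fun t : ℝ ↦ t ^ r) 1) (Ico 0 1) :=
  (concaveOn_rpow hr₀ hr₁).antitoneOn_slope_lt (x := 1) (by simp)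

lemma slope_rpow_one_zero {r : ℝ} (hr : r ≠ 0) : slope (fun t : ℝ ↦ t ^ r) 1 0 = 1 := by
  simp [slope_def_field, zero_rpow hr]

lemma hasDerivAt_rpow_const_one (r : ℝ) : HasDerivAt (fun t : ℝ ↦ t ^ r) r 1 := by
  simpa using hasDerivAt_rpow_const (x := 1) (p := r) (Or.inl one_ne_zero)

lemma slope_rpow_one_le {r t : ℝ} (hr : 1 ≤ r) (ht : t ∈ Ico 0 1) :
    slope (fun t : ℝ ↦ t ^ r) 1 t ≤ r := by
  rw [slope_comm]
  exact (convexOn_rpow hr).slope_le_of_hasDerivAt ht.1 (by simp) ht.2 (hasDerivAt_rpow_const_one r)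

lemma le_slope_rpow_one {r t : ℝ} (hr₀ : 0 ≤ r) (hr₁ : r ≤ 1) (ht : t ∈ Ico 0 1) :
    r ≤ slope (fun t : ℝ ↦ t ^ r) 1 t := by
  rw [slope_comm]
  exact (concaveOn_rpow hr₀ hr₁).le_slope_of_hasDerivAt ht.1 (by simp) ht.2
    (hasDerivAt_rpow_const_one r)

lemma slope_rpow_one_mem_Icc {r t : ℝ} (hr : 0 < r) (ht : t ∈ Ico 0 1) :
    min 1 r ≤ slope (fun t : ℝ ↦ t ^ r) 1 t ∧ slope (fun t : ℝ ↦ t ^ r) 1 t ≤ max 1 r := by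
  have h0 : (0 : ℝ) ∈ Ico 0 1 := by simp
  have hslope0 := slope_rpow_one_zero hr.ne'
  rcases le_total 1 r with hr₁ | hr₁
  · rw [min_eq_left hr₁, max_eq_right hr₁]
    exact ⟨hslope0.symm.trans_le (monotoneOn_slope_rpow_one hr₁ h0 ht ht.1),
      slope_rpow_one_le hr₁ ht⟩
  · rw [min_eq_right hr₁, max_eq_left hr₁]
    exact ⟨le_slope_rpow_one hr.le hr₁ ht,
      (antitoneOn_slope_rpow_one hr.le hr₁ h0 ht ht.1).trans_eq hslope0⟩

lemma mapsTo_div_add_one : MapsTo (fun x : ℝ ↦ x / (x + 1)) (Ici 0) (Ico 0 1) := fun x hx ↦ by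
  have hx1 : (0 : ℝ) < x + 1 := by linarith [mem_Ici.1 hx]
  exact ⟨div_nonneg hx hx1.le, (div_lt_one hx1).2 (lt_add_one x)⟩

lemma monotoneOn_div_add_one : MonotoneOn (fun x : ℝ ↦ x / (x + 1)) (Ici 0) :=
  fun a ha b hb hab ↦ by
    simp only [mem_Ici] at ha hb
    rw [div_le_div_iff₀ (by linarith) (by linarith)]
    linarith

/-- For r ≥ 1/2 and `f(x) = ((x+1)^r - x^r)/(x+1)^{r-1}` on `[0,∞)`,
`f` is monotone nondecreasing on `[0,∞)` if `r ≥ 1` and nonincreasing if `1/2 ≤ r ≤ 1`;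
consequently `min{1,r} ≤ f(x) ≤ max{1,r}` for all `x ≥ 0`. -/
theorem stmt_8 (r : ℝ) (hr : 1 / 2 ≤ r)
    (f : ℝ → ℝ) (hf : ∀ x : ℝ, 0 ≤ x → f x = ((x + 1) ^ r - x ^ r) / (x + 1) ^ (r - 1)) :
    (1 ≤ r → MonotoneOn f (Set.Ici 0)) ∧
    (r ≤ 1 → AntitoneOn f (Set.Ici 0)) ∧
    (∀ x : ℝ, 0 ≤ x → min 1 r ≤ f x ∧ f x ≤ max 1 r) := by
  have hr₀ : 0 < r := by linarith
  have hf_eq : EqOn (slope (fun t : ℝ ↦ t ^ r) 1 ∘ fun x ↦ x / (x + 1)) f (Ici 0) := fun x hx ↦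
    ((hf x hx).trans (sub_rpow_div_rpow_eq_slope r hx)).symm
  refine ⟨fun hr₁ ↦ ?_, fun hr₁ ↦ ?_, fun x hx ↦ ?_⟩
  · exact ((monotoneOn_slope_rpow_one hr₁).comp monotoneOn_div_add_one mapsTo_div_add_one).congr
      hf_eq
  · exact ((antitoneOn_slope_rpow_one hr₀.le hr₁).comp_MonotoneOn monotoneOn_div_add_one
      mapsTo_div_add_one).congr hf_eq
  · rw [← hf_eq hx]
    exact slope_rpow_one_mem_Icc hr₀ (mapsTo_div_add_one hx)
end

section
/- Fix μ₁ > 0, l ∈ ℕ, r ≥ 1/2, and a natural number m ≥ 1. For every σ with 0 ≤ σ ≤ 2m, every α > 0, and every μ with 0 < μ ≤ μ₁, one has (1 − Q_l^{m,r}(α,μ))·μ^σ = (1 − q_l^r(α,μ))^m · μ^σ ≤ max{1, r}^m · μ₁^{max(σ−2m, 0)} · α^{σ/2}; in particular for 0 ≤ σ ≤ 2m the bound (1 − Q_l^{m,r}(α,μ))·μ^σ ≤ max{1, r}^m · α^{σ/2} holds. (This is condition (B2) with γ = 1/2 for the iterated filter, giving qualification 2m.) -/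
/-! Write `t = μ² / D` with `D = μ² + α w`, where the weight
`w = (1 - (μ / μ₁)²) ^ l` lies in `[0, 1]`, so that `q_l^r = t ^ r`. Bernoulli's
inequality (for `r ≥ 1`) and `t ≤ t ^ r` (for `r ≤ 1`) give `1 - t ^ r ≤ max 1 r · (1 - t)`, and
`1 - t ≤ α / (μ² + α)`. What remains is the classical Tikhonov estimate
`(α / (x + α)) ^ m · x ^ τ ≤ α ^ τ` for `x = μ²`, `τ = σ / 2 ≤ m`. -/

open Real

theorem one_sub_rpow_le_max_mul_one_sub {t r : ℝ} (ht0 : 0 ≤ t) (ht1 : t ≤ 1) :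
    1 - t ^ r ≤ max 1 r * (1 - t) := by
  rcases le_total r 1 with hr | hr
  · have hle : t ≤ t ^ r := self_le_rpow_of_le_one ht0 ht1 hr
    nlinarith [le_max_left 1 r]
  · have bernoulli := one_add_mul_self_le_rpow_one_add (by linarith : (-1 : ℝ) ≤ t - 1) hr
    rw [add_sub_cancel] at bernoulli
    rw [max_eq_right hr]
    linarith

theorem div_add_self_pow_mul_rpow_le {α x τ : ℝ} {m : ℕ} (hα : 0 < α) (hx : 0 ≤ x)
    (hτ0 : 0 ≤ τ) (hτm : τ ≤ m) :
    (α / (x + α)) ^ m * x ^ τ ≤ α ^ τ := by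
  set s := α / (x + α)
  have hs0 : 0 < s := by positivity
  have hs1 : s ≤ 1 := (div_le_one (by positivity)).2 (by linarith)
  have hsx : s * x ≤ α := by
    rw [div_mul_eq_mul_div, div_le_iff₀ (by positivity)]
    nlinarith
  calc s ^ m * x ^ τ = s ^ (m : ℝ) * x ^ τ := by rw [rpow_natCast]
    _ ≤ s ^ τ * x ^ τ :=
      mul_le_mul_of_nonneg_right (rpow_le_rpow_of_exponent_ge hs0 hs1 hτm) (rpow_nonneg hx τ)
    _ = (s * x) ^ τ := (mul_rpow hs0.le hx).symm
    _ ≤ α ^ τ := by gcongr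

theorem one_sub_rpow_div_rpow_pow_mul_rpow_le {r α μ D σ : ℝ} {m : ℕ} (hr : 0 ≤ r)
    (hα : 0 < α) (hμ : 0 < μ) (hD1 : μ ^ 2 ≤ D) (hD2 : D ≤ μ ^ 2 + α)
    (hσ0 : 0 ≤ σ) (hσ2m : σ ≤ 2 * m) :
    (1 - μ ^ (2 * r) / D ^ r) ^ m * μ ^ σ ≤ max 1 r ^ m * α ^ (σ / 2) := by
  have hD0 : 0 < D := lt_of_lt_of_le (by positivity) hD1
  set t := μ ^ 2 / D
  have ht0 : 0 ≤ t := by positivity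
  have ht1 : t ≤ 1 := (div_le_one hD0).2 hD1
  have hq : μ ^ (2 * r) / D ^ r = t ^ r := by
    rw [div_rpow (by positivity) hD0.le, ← rpow_natCast μ 2, ← rpow_mul hμ.le]
    norm_num
  have hμσ : μ ^ σ = (μ ^ 2) ^ (σ / 2) := by
    rw [← rpow_natCast μ 2, ← rpow_mul hμ.le]
    ring_nf
  have hresidual : 1 - t ≤ α / (μ ^ 2 + α) := by
    rw [one_sub_div hD0.ne', div_le_div_iff₀ hD0 (by positivity)]
    nlinarith
  have hq0 : 0 ≤ 1 - t ^ r := by linarith [rpow_le_one ht0 ht1 hr]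
  have hq1 : 1 - t ^ r ≤ max 1 r * (α / (μ ^ 2 + α)) :=
    (one_sub_rpow_le_max_mul_one_sub ht0 ht1).trans
      (mul_le_mul_of_nonneg_left hresidual (by positivity))
  rw [hq]
  calc (1 - t ^ r) ^ m * μ ^ σ ≤ (max 1 r * (α / (μ ^ 2 + α))) ^ m * μ ^ σ := by gcongr
    _ = max 1 r ^ m * ((α / (μ ^ 2 + α)) ^ m * (μ ^ 2) ^ (σ / 2)) := by
      rw [mul_pow, hμσ, mul_assoc]
    _ ≤ max 1 r ^ m * α ^ (σ / 2) := by
      gcongr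
      exact div_add_self_pow_mul_rpow_le hα (sq_nonneg μ) (by linarith) (by linarith)

theorem stmt_12_general (μ₁ : ℝ) (hμ₁ : 0 < μ₁) (l : ℕ) (r : ℝ) (hr : 1 / 2 ≤ r)
    (m : ℕ) (σ : ℝ) (hσ0 : 0 ≤ σ) (hσ2m : σ ≤ 2 * m)
    (α : ℝ) (hα : 0 < α) (μ : ℝ) (hμ : 0 < μ) (hμμ₁ : μ ≤ μ₁) :
    (1 - (1 - (1 - μ ^ (2 * r) / (μ ^ 2 + α * (1 - (μ / μ₁) ^ 2) ^ l) ^ r) ^ m)) * μ ^ σ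
      = (1 - μ ^ (2 * r) / (μ ^ 2 + α * (1 - (μ / μ₁) ^ 2) ^ l) ^ r) ^ m * μ ^ σ ∧
    (1 - μ ^ (2 * r) / (μ ^ 2 + α * (1 - (μ / μ₁) ^ 2) ^ l) ^ r) ^ m * μ ^ σ
      ≤ max 1 r ^ m * μ₁ ^ (max (σ - 2 * m) 0) * α ^ (σ / 2) ∧
    (1 - (1 - (1 - μ ^ (2 * r) / (μ ^ 2 + α * (1 - (μ / μ₁) ^ 2) ^ l) ^ r) ^ m)) * μ ^ σ
      ≤ max 1 r ^ m * α ^ (σ / 2) := by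
  have hratio0 : 0 ≤ μ / μ₁ := by positivity
  have hratio1 : μ / μ₁ ≤ 1 := (div_le_one hμ₁).2 hμμ₁
  have hw0 : 0 ≤ (1 - (μ / μ₁) ^ 2) ^ l := pow_nonneg (by nlinarith) l
  have hw1 : (1 - (μ / μ₁) ^ 2) ^ l ≤ 1 := pow_le_one₀ (by nlinarith) (by nlinarith)
  have hbound := one_sub_rpow_div_rpow_pow_mul_rpow_le (r := r) (by linarith) hα hμ
    (by nlinarith : μ ^ 2 ≤ μ ^ 2 + α * (1 - (μ / μ₁) ^ 2) ^ l)
    (by nlinarith : μ ^ 2 + α * (1 - (μ / μ₁) ^ 2) ^ l ≤ μ ^ 2 + α) hσ0 hσ2m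
  have hresidual : ∀ x : ℝ, (1 - (1 - x ^ m)) * μ ^ σ = x ^ m * μ ^ σ := fun x => by ring
  refine ⟨hresidual _, ?_, (hresidual _).trans_le hbound⟩
  rwa [max_eq_right (by linarith : σ - 2 * m ≤ 0), rpow_zero, mul_one]

/-- For μ₁ > 0, l ∈ ℕ, r ≥ 1/2, m ≥ 1, 0 ≤ σ ≤ 2m, α > 0 and 0 < μ ≤ μ₁,
with `q = q_l^r(α,μ)` and `Q_l^{m,r} = 1 - (1-q)^m`, one has
`(1 - Q_l^{m,r}(α,μ)) μ^σ = (1 - q)^m μ^σ ≤ max{1,r}^m μ₁^{max(σ-2m,0)} α^{σ/2}`,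
and in particular `(1 - Q_l^{m,r}(α,μ)) μ^σ ≤ max{1,r}^m α^{σ/2}`
(condition (B2) with γ = 1/2, qualification 2m). -/
theorem stmt_12 (μ₁ : ℝ) (hμ₁ : 0 < μ₁) (l : ℕ) (r : ℝ) (hr : 1 / 2 ≤ r)
    (m : ℕ) (hm : 1 ≤ m) (σ : ℝ) (hσ0 : 0 ≤ σ) (hσ2m : σ ≤ 2 * m)
    (α : ℝ) (hα : 0 < α) (μ : ℝ) (hμ : 0 < μ) (hμμ₁ : μ ≤ μ₁) :
    (1 - (1 - (1 - μ ^ (2 * r) / (μ ^ 2 + α * (1 - (μ / μ₁) ^ 2) ^ l) ^ r) ^ m)) * μ ^ σ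
      = (1 - μ ^ (2 * r) / (μ ^ 2 + α * (1 - (μ / μ₁) ^ 2) ^ l) ^ r) ^ m * μ ^ σ ∧
    (1 - μ ^ (2 * r) / (μ ^ 2 + α * (1 - (μ / μ₁) ^ 2) ^ l) ^ r) ^ m * μ ^ σ
      ≤ max 1 r ^ m * μ₁ ^ (max (σ - 2 * m) 0) * α ^ (σ / 2) ∧
    (1 - (1 - (1 - μ ^ (2 * r) / (μ ^ 2 + α * (1 - (μ / μ₁) ^ 2) ^ l) ^ r) ^ m)) * μ ^ σ
      ≤ max 1 r ^ m * α ^ (σ / 2) :=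
  stmt_12_general μ₁ hμ₁ l r hr m σ hσ0 hσ2m α hα μ hμ hμμ₁
end
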